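/- Let W be a Coxeter group, J a subset of simple reflections, and (v,w), (v',w') ∈ Q_J. If there exists r ∈ W_J (not assumed length-additive with v) with v' ≤ vr ≤ wr ≤ w', then there exists r' ∈ W_J with ℓ(vr') = ℓ(v) + ℓ(r') and v' ≤ vr' ≤ wr' ≤ w'. -/

import Mathlib

/-
Write `r` as a reduced word `ω` in the generators `J` and walk along `ω` starting from `v`,
keeping only the letters that make the length go up; the kept letters multiply to `r'`. Then
`v * r'` is length-additive by construction, and the lifting property of the Bruhat order gives
`v * r ≤ v * r'`. Since `w` has no right descent in `J`, multiplying `w` by any reduced word in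
`J` is length-additive, so lifting letter by letter turns `v ≤ w` into `v * r' ≤ w * r'`, while
the subword property (`r'` is a subword of `ω`) gives `w * r' ≤ w * r`.

Lifting and subword properties rest on the strong exchange condition, which comes from Tits'
permutation representation of `W` on `W × ZMod 2`: `s i` conjugates the first coordinate and
flips the second one exactly at `s i`, and the second coordinate of the image of `(t, 0)` under
`w` records whether `t` is a right inversion of `w`.
-/

variable {B W : Type*} [Group W]

/-- `t` is a reflection of the Coxeter system `cs`, i.e. a conjugate of a simple reflection. -/
def IsCoxReflection {M : CoxeterMatrix B} (cs : CoxeterSystem M W) (t : W) : Prop :=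
  ∃ (g : W) (i : B), t = g * cs.simple i * g⁻¹

/-- One step in the Bruhat order: multiply on the right by a reflection, increasing length. -/
def BruhatStep {M : CoxeterMatrix B} (cs : CoxeterSystem M W) (u w : W) : Prop :=
  cs.length u < cs.length w ∧ ∃ t : W, IsCoxReflection cs t ∧ w = u * t

/-- The Bruhat order on a Coxeter group: reflexive-transitive closure of `BruhatStep`. -/
def BruhatLE {M : CoxeterMatrix B} (cs : CoxeterSystem M W) : W → W → Prop :=
  Relation.ReflTransGen (BruhatStep cs)

theorem mul_mul_inv_eq_iff_eq_inv_mul_mul {G : Type*} [Group G] {g a b : G} :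
    g * a * g⁻¹ = b ↔ a = g⁻¹ * b * g := by
  constructor <;> rintro rfl <;> group

open Finset in
theorem sum_range_pairs_eq_zero_of_periodic {f : ℕ → ZMod 2} {m : ℕ}
    (hf : Function.Periodic f m) : ∑ l ∈ range m, (f (2 * l) + f (2 * l + 1)) = 0 := by
  have pairs :
      ∀ n, ∑ l ∈ range n, (f (2 * l) + f (2 * l + 1)) = ∑ e ∈ range (2 * n), f e := by
    intro n
    induction n with
    | zero => simp
    | succ n ih => rw [sum_range_succ, ih, Nat.mul_succ, sum_range_succ, sum_range_succ, add_assoc]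
  rw [pairs, two_mul, sum_range_add]
  simp only [add_comm m, show ∀ x, f (x + m) = f x from hf, CharTwo.add_self_eq_zero]

open Finset in
theorem iterate_map_add_eq {α A : Type*} [AddCommMonoid A] (φ : α → α) (c : α → A)
    (n : ℕ) (a : α) (e : A) :
    (fun p : α × A ↦ (φ p.1, p.2 + c p.1))^[n] (a, e) =
      (φ^[n] a, e + ∑ l ∈ range n, c (φ^[l] a)) := by
  induction n with
  | zero => simp
  | succ n ih => rw [Function.iterate_succ_apply', ih, sum_range_succ, add_assoc,
      Function.iterate_succ_apply']

namespace CoxeterSystem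

variable {M : CoxeterMatrix B} (cs : CoxeterSystem M W)

local prefix:100 "s" => cs.simple
local prefix:100 "π" => cs.wordProd
local prefix:100 "ℓ" => cs.length
local prefix:100 "ris" => cs.rightInvSeq

theorem simple_mul_mul_simple_eq_iff {i : B} {x u : W} :
    s i * x * s i = u ↔ x = s i * u * s i := by
  constructor <;> rintro rfl <;> simp only [mul_assoc, simple_mul_simple_cancel_left,
    simple_mul_simple_self, mul_one]

open scoped Classical in
noncomputable def simplePerm (i : B) : Equiv.Perm (W × ZMod 2) :=
  Function.Involutive.toPerm (fun p ↦ (s i * p.1 * s i, p.2 + if p.1 = s i then 1 else 0)) <| by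
    rintro ⟨t, e⟩
    simp only [simple_mul_mul_simple_eq_iff, add_assoc, CharTwo.add_self_eq_zero, add_zero,
      ← mul_assoc, simple_mul_simple_cancel_right, simple_mul_simple_self, one_mul]

open scoped Classical in
theorem simplePerm_apply (i : B) (t : W) (e : ZMod 2) :
    cs.simplePerm i (t, e) = (s i * t * s i, e + if t = s i then 1 else 0) := rfl

theorem inv_pow_mul_simple_mul_pow (i j : B) (l : ℕ) :
    ((s i * s j) ^ l)⁻¹ * s j * (s i * s j) ^ l = s j * (s i * s j) ^ (2 * l) := by
  have : s j * (s i * s j) * (s j)⁻¹ = (s i * s j)⁻¹ := by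
    simp [mul_assoc]
  rw [← inv_pow, ← this, conj_pow, inv_simple, two_mul, pow_add]
  simp only [mul_assoc, simple_mul_simple_cancel_left]

open scoped Classical in
theorem isLiftable_simplePerm : M.IsLiftable cs.simplePerm := by
  intro i j
  let c : W → ZMod 2 := fun t ↦
    (if t = s j then 1 else 0) + if s j * t * s j = s i then 1 else 0
  have hD : ⇑(cs.simplePerm i * cs.simplePerm j) =
      fun p : W × ZMod 2 ↦ (s i * s j * p.1 * (s i * s j)⁻¹, p.2 + c p.1) := by
    ext ⟨t, e⟩
    · simp [simplePerm_apply, mul_assoc]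
    · simp [simplePerm_apply, c, add_assoc]
  have hconj := cs.inv_pow_mul_simple_mul_pow i j
  have hpow := cs.simple_mul_simple_pow i j
  have hsji : s j * s i * s j = s j * (s i * s j) := by rw [mul_assoc]
  generalize s i * s j = g at hD hconj hpow hsji
  have hiter : ∀ l t, (fun t ↦ g * t * g⁻¹)^[l] t = g ^ l * t * (g ^ l)⁻¹ := by
    intro l t
    induction l with
    | zero => simp
    | succ l ih => rw [Function.iterate_succ_apply', ih, pow_succ']; group
  ext ⟨t, e⟩ : 1
  rw [Equiv.Perm.coe_pow, hD, iterate_map_add_eq (fun t ↦ g * t * g⁻¹) c]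
  simp only [hiter, hpow, one_mul, inv_one, mul_one, Equiv.Perm.one_apply, Prod.mk.injEq,
    true_and, add_eq_left]
  have hc : ∀ l, c (g ^ l * t * (g ^ l)⁻¹) =
      (if t = s j * g ^ (2 * l) then 1 else 0) + if t = s j * g ^ (2 * l + 1) then 1 else 0 := by
    intro l
    have h2 : (g ^ l)⁻¹ * (s j * g) * g ^ l = s j * g ^ (2 * l + 1) := by
      rw [pow_succ, ← mul_assoc (s j), ← hconj]
      simp only [mul_assoc, pow_mul_comm']
    simp only [c, simple_mul_mul_simple_eq_iff, mul_mul_inv_eq_iff_eq_inv_mul_mul, hconj, hsji,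
      h2]
  -- the reflections `s j * g ^ e`, `e < 2 * M i j`, met along the way repeat with period `M i j`
  simp only [hc]
  refine sum_range_pairs_eq_zero_of_periodic (f := fun e ↦ if t = s j * g ^ e then 1 else 0) ?_
  intro e
  simp only [pow_add, hpow, mul_one]

noncomputable def titsRep : W →* Equiv.Perm (W × ZMod 2) :=
  cs.lift ⟨cs.simplePerm, cs.isLiftable_simplePerm⟩

theorem titsRep_simple (i : B) : cs.titsRep (s i) = cs.simplePerm i :=
  cs.lift_apply_simple cs.isLiftable_simplePerm i

open scoped Classical in
theorem titsRep_wordProd (ω : List B) (t : W) (e : ZMod 2) :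
    cs.titsRep (π ω) (t, e) = (π ω * t * (π ω)⁻¹, e + ((ris ω).count t : ZMod 2)) := by
  induction ω generalizing t e with
  | nil => simp
  | cons i ω ih =>
    rw [wordProd_cons, map_mul, Equiv.Perm.mul_apply, ih, titsRep_simple, simplePerm_apply]
    have hcount : ((ris (i :: ω)).count t : ZMod 2) =
        (ris ω).count t + if π ω * t * (π ω)⁻¹ = s i then 1 else 0 := by
      simp only [rightInvSeq, List.count_cons, beq_iff_eq, mul_mul_inv_eq_iff_eq_inv_mul_mul,
        @eq_comm _ t]
      push_cast
      rfl
    refine Prod.ext ?_ ?_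
    · simp only [mul_inv_rev, inv_simple, mul_assoc]
    · rw [hcount, add_assoc]

noncomputable def inversionParity (w t : W) : ZMod 2 := (cs.titsRep w (t, 0)).2

theorem titsRep_apply (w t : W) (e : ZMod 2) :
    cs.titsRep w (t, e) = (w * t * w⁻¹, e + cs.inversionParity w t) := by
  obtain ⟨ω, -, rfl⟩ := cs.exists_isReduced w
  simp [inversionParity, titsRep_wordProd]

open scoped Classical in
theorem inversionParity_wordProd (ω : List B) (t : W) :
    cs.inversionParity (π ω) t = (ris ω).count t := by
  simp [inversionParity, titsRep_wordProd]

theorem inversionParity_mul (a b t : W) :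
    cs.inversionParity (a * b) t =
      cs.inversionParity b t + cs.inversionParity a (b * t * b⁻¹) := by
  have h := congrArg Prod.snd (cs.titsRep_apply (a * b) t 0)
  rw [map_mul, Equiv.Perm.mul_apply, titsRep_apply, titsRep_apply] at h
  simpa using h.symm

theorem inversionParity_one (t : W) : cs.inversionParity 1 t = 0 := by
  simp [inversionParity]

theorem inversionParity_simple_self (i : B) : cs.inversionParity (s i) (s i) = 1 := by
  simp [inversionParity, titsRep_simple, simplePerm_apply]

theorem inversionParity_self {t : W} (ht : cs.IsReflection t) : cs.inversionParity t t = 1 := by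
  obtain ⟨g, i, rfl⟩ := ht
  have h1 := cs.inversionParity_mul (g * s i) g⁻¹ (g * s i * g⁻¹)
  have h2 := cs.inversionParity_mul g (s i) (s i)
  have h3 := cs.inversionParity_mul g g⁻¹ (g * s i * g⁻¹)
  have e1 : g⁻¹ * (g * s i * g⁻¹) * g⁻¹⁻¹ = s i := by group
  have e2 : s i * s i * (s i)⁻¹ = s i := by group
  rw [e1] at h1 h3
  rw [e2, inversionParity_simple_self] at h2
  rw [mul_inv_cancel, inversionParity_one] at h3
  rw [h1, h2, add_left_comm, ← h3, add_zero]

theorem mem_rightInvSeq_of_inversionParity_eq_one {ω : List B} {t : W}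
    (h : cs.inversionParity (π ω) t = 1) : t ∈ ris ω := by
  classical
  rw [inversionParity_wordProd] at h
  exact List.count_pos_iff.mp (Nat.pos_of_ne_zero fun h0 ↦ by simp [h0] at h)

theorem length_mul_lt_of_inversionParity_eq_one {w t : W} (h : cs.inversionParity w t = 1) :
    ℓ (w * t) < ℓ w := by
  obtain ⟨ω, hω, rfl⟩ := cs.exists_isReduced w
  exact (cs.isRightInversion_of_mem_rightInvSeq hω
    (cs.mem_rightInvSeq_of_inversionParity_eq_one h)).2

theorem inversionParity_eq_one_of_length_mul_lt {w t : W} (ht : cs.IsReflection t)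
    (h : ℓ (w * t) < ℓ w) : cs.inversionParity w t = 1 := by
  by_contra hne
  have h0 : cs.inversionParity w t = 0 := by
    generalize cs.inversionParity w t = a at hne
    revert a
    decide
  -- then `t` would be a right inversion of `w * t`
  have hwt : cs.inversionParity (w * t) t = 1 := by
    rw [inversionParity_mul, inversionParity_self cs ht, ht.mul_self, one_mul, ht.inv, h0, add_zero]
  have := cs.length_mul_lt_of_inversionParity_eq_one hwt
  rw [mul_assoc, ht.mul_self, mul_one] at this
  omega

theorem strong_exchange (ω : List B) {t : W} (ht : cs.IsReflection t)
    (h : ℓ (π ω * t) < ℓ (π ω)) : ∃ j < ω.length, π ω * t = π (ω.eraseIdx j) := by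
  have hmem := cs.mem_rightInvSeq_of_inversionParity_eq_one
    (cs.inversionParity_eq_one_of_length_mul_lt ht h)
  obtain ⟨j, hj, rfl⟩ := List.getElem_of_mem hmem
  refine ⟨j, by simpa using hj, ?_⟩
  rw [← List.getD_eq_getElem _ 1 hj, wordProd_mul_getD_rightInvSeq]

theorem strong_exchange_append (ρ κ : List B) {t : W} (ht : cs.IsReflection t)
    (h : ℓ (π ρ * π κ * t) < ℓ (π ρ * π κ)) :
    (∃ j < ρ.length, π ρ * π κ * t = π (ρ.eraseIdx j) * π κ) ∨
      ∃ j < κ.length, π ρ * π κ * t = π ρ * π (κ.eraseIdx j) := by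
  rw [← wordProd_append] at h ⊢
  obtain ⟨j, hj, he⟩ := cs.strong_exchange (ρ ++ κ) ht h
  rw [he]
  rcases lt_or_ge j ρ.length with hjρ | hjρ
  · exact Or.inl ⟨j, hjρ, by rw [List.eraseIdx_append_of_lt_length hjρ, wordProd_append]⟩
  · refine Or.inr ⟨j - ρ.length, by simp only [List.length_append] at hj; omega, ?_⟩
    rw [List.eraseIdx_append_of_length_le hjρ, wordProd_append]

theorem IsReduced.of_append_left {ω ω' : List B} (h : cs.IsReduced (ω ++ ω')) :
    cs.IsReduced ω := by
  simpa using h.take ω.length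

theorem isReduced_of_length_mul_wordProd {a : W} {κ : List B}
    (h : ℓ (a * π κ) = ℓ a + κ.length) : cs.IsReduced κ := by
  have h1 := cs.length_mul_le a (π κ)
  have h2 := cs.length_wordProd_le κ
  rw [IsReduced]
  omega

theorem exists_isReduced_sublist (ω : List B) :
    ∃ μ, μ.Sublist ω ∧ cs.IsReduced μ ∧ π μ = π ω := by
  induction ω using List.reverseRecOn with
  | nil => exact ⟨[], List.Sublist.slnil, by simp [IsReduced], rfl⟩
  | append_singleton ω i ih =>
    obtain ⟨μ, hμω, hμ, hπ⟩ := ih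
    rw [wordProd_append, wordProd_singleton, ← hπ]
    rcases cs.length_mul_simple (π μ) i with hasc | hdesc
    · refine ⟨μ ++ [i], hμω.append (List.Sublist.refl _), ?_, by simp [wordProd_append]⟩
      rw [IsReduced, wordProd_append, wordProd_singleton, hasc, hμ, List.length_append,
        List.length_singleton]
    · obtain ⟨j, hj, he⟩ := cs.strong_exchange μ (cs.isReflection_simple i) (by omega)
      refine ⟨μ.eraseIdx j, ((μ.eraseIdx_sublist j).trans hμω).trans
        (List.sublist_append_left ω [i]), ?_, he.symm⟩
      rw [IsReduced, ← he, List.length_eraseIdx_of_lt hj]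
      rw [IsReduced] at hμ
      omega

theorem wordProd_mem_closure {J : Set B} {ω : List B} (hω : ∀ b ∈ ω, b ∈ J) :
    π ω ∈ Subgroup.closure (cs.simple '' J) :=
  Subgroup.list_prod_mem _ fun x hx ↦ by
    obtain ⟨b, hb, rfl⟩ := List.mem_map.1 hx
    exact Subgroup.subset_closure ⟨b, hω b hb, rfl⟩

theorem exists_wordProd_eq_of_mem_closure {J : Set B} {g : W}
    (hg : g ∈ Subgroup.closure (cs.simple '' J)) :
    ∃ ω : List B, (∀ b ∈ ω, b ∈ J) ∧ π ω = g := by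
  induction hg using Subgroup.closure_induction with
  | mem x hx =>
    obtain ⟨i, hi, rfl⟩ := hx
    exact ⟨[i], by simpa using hi, wordProd_singleton cs i⟩
  | one => exact ⟨[], by simp, wordProd_nil cs⟩
  | mul x y _ _ ihx ihy =>
    obtain ⟨ω₁, h₁, rfl⟩ := ihx
    obtain ⟨ω₂, h₂, rfl⟩ := ihy
    exact ⟨ω₁ ++ ω₂, fun b hb ↦ (List.mem_append.1 hb).elim (h₁ b) (h₂ b),
      wordProd_append cs _ _⟩
  | inv x _ ihx =>
    obtain ⟨ω, h, rfl⟩ := ihx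
    exact ⟨ω.reverse, fun b hb ↦ h b (List.mem_reverse.1 hb), wordProd_reverse cs ω⟩

theorem exists_isReduced_of_mem_closure {J : Set B} {g : W}
    (hg : g ∈ Subgroup.closure (cs.simple '' J)) :
    ∃ ω : List B, (∀ b ∈ ω, b ∈ J) ∧ cs.IsReduced ω ∧ π ω = g := by
  obtain ⟨ω₀, hω₀J, rfl⟩ := cs.exists_wordProd_eq_of_mem_closure hg
  obtain ⟨ω, hωω₀, hω, hπ⟩ := cs.exists_isReduced_sublist ω₀
  exact ⟨ω, fun b hb ↦ hω₀J b (hωω₀.subset hb), hω, hπ⟩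

theorem length_mul_wordProd_of_forall_le {J : Set B} {x : W}
    (hx : ∀ g ∈ Subgroup.closure (cs.simple '' J), ℓ x ≤ ℓ (x * g)) {κ : List B}
    (hκJ : ∀ b ∈ κ, b ∈ J) (hκ : cs.IsReduced κ) :
    ℓ (x * π κ) = ℓ x + κ.length := by
  induction κ using List.reverseRecOn with
  | nil => simp
  | append_singleton κ i ih =>
    have hκ'J : ∀ b ∈ κ, b ∈ J := fun b hb ↦ hκJ b (by simp [hb])
    have hiJ : i ∈ J := hκJ i (by simp)
    have ih := ih hκ'J hκ.of_append_left
    rw [wordProd_append, wordProd_singleton, ← mul_assoc, List.length_append,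
      List.length_singleton]
    rcases cs.length_mul_simple (x * π κ) i with hasc | hdesc
    · omega
    exfalso
    obtain ⟨ρ, hρ, rfl⟩ := cs.exists_isReduced x
    rcases cs.strong_exchange_append ρ κ (cs.isReflection_simple i) (by omega)
      with ⟨j, hj, he⟩ | ⟨j, hj, he⟩
    · -- `π ρ` would be shortened by an element of the parabolic subgroup
      have hg : π κ * s i * (π κ)⁻¹ ∈ Subgroup.closure (cs.simple '' J) :=
        mul_mem (mul_mem (cs.wordProd_mem_closure hκ'J)
          (Subgroup.subset_closure ⟨i, hiJ, rfl⟩)) (inv_mem (cs.wordProd_mem_closure hκ'J))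
      have hshort : π ρ * (π κ * s i * (π κ)⁻¹) = π (ρ.eraseIdx j) := by
        rw [← mul_assoc, ← mul_assoc, he, mul_inv_cancel_right]
      have hle := hx _ hg
      have hlen := cs.length_wordProd_le (ρ.eraseIdx j)
      rw [hshort] at hle
      rw [List.length_eraseIdx_of_lt hj] at hlen
      rw [IsReduced] at hρ
      omega
    · have hκi : π κ * s i = π (κ.eraseIdx j) := by
        rw [← mul_right_inj (π ρ), ← mul_assoc, he]
      have hlen := cs.length_wordProd_le (κ.eraseIdx j)
      rw [IsReduced, wordProd_append, wordProd_singleton, hκi] at hκ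
      rw [List.length_eraseIdx_of_lt hj] at hlen
      simp only [List.length_append, List.length_singleton] at hκ
      omega

theorem exists_forall_length_le_mul (J : Set B) (w : W) :
    ∃ g ∈ Subgroup.closure (cs.simple '' J),
      ∀ g' ∈ Subgroup.closure (cs.simple '' J), ℓ (w * g) ≤ ℓ (w * g * g') := by
  obtain ⟨g, hg, hmin⟩ := (measure fun g ↦ ℓ (w * g)).wf.has_min
    (Subgroup.closure (cs.simple '' J) : Set W) ⟨1, one_mem _⟩
  refine ⟨g, hg, fun g' hg' ↦ ?_⟩
  rw [mul_assoc]
  exact not_lt.1 (hmin (g * g') (mul_mem hg hg'))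

theorem length_mul_wordProd_of_forall_lt {J : Set B} {w : W}
    (hw : ∀ j ∈ J, ℓ w < ℓ (w * s j)) {κ : List B} (hκJ : ∀ b ∈ κ, b ∈ J)
    (hκ : cs.IsReduced κ) : ℓ (w * π κ) = ℓ w + κ.length := by
  obtain ⟨g, hg, hmin⟩ := cs.exists_forall_length_le_mul J w
  obtain ⟨τ, hτJ, hτ, hτg⟩ := cs.exists_isReduced_of_mem_closure (inv_mem hg)
  have hwτ : w = w * g * π τ := by rw [hτg, mul_inv_cancel_right]
  suffices τ = [] by
    rw [this, wordProd_nil, mul_one] at hwτ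
    rw [← hwτ] at hmin
    exact cs.length_mul_wordProd_of_forall_le hmin hκJ hκ
  rcases List.eq_nil_or_concat' τ with hnil | ⟨τ', i, rfl⟩
  · exact hnil
  -- otherwise the last letter of `τ` would be a descent of `w`
  have hτ'J : ∀ b ∈ τ', b ∈ J := fun b hb ↦ hτJ b (by simp [hb])
  have h1 := cs.length_mul_wordProd_of_forall_le hmin hτJ hτ
  have h2 := cs.length_mul_wordProd_of_forall_le hmin hτ'J hτ.of_append_left
  have h3 := hw i (hτJ i (by simp))
  have hws : w * s i = w * g * π τ' := by
    conv_lhs => rw [hwτ]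
    rw [wordProd_append, wordProd_singleton, ← mul_assoc, simple_mul_simple_cancel_right]
  rw [← hwτ] at h1
  rw [hws] at h3
  simp only [List.length_append, List.length_singleton] at h1
  omega

end CoxeterSystem

section Bruhat

variable {M : CoxeterMatrix B} {cs : CoxeterSystem M W}

local prefix:100 "s" => cs.simple
local prefix:100 "π" => cs.wordProd
local prefix:100 "ℓ" => cs.length

open CoxeterSystem

variable (cs) in
theorem BruhatLE.refl (w : W) : BruhatLE cs w w :=
  Relation.ReflTransGen.refl

theorem BruhatLE.trans {u v w : W} (huv : BruhatLE cs u v) (hvw : BruhatLE cs v w) :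
    BruhatLE cs u w :=
  Relation.ReflTransGen.trans huv hvw

theorem bruhatLE_mul_of_length_lt {u t : W} (ht : cs.IsReflection t) (h : ℓ u < ℓ (u * t)) :
    BruhatLE cs u (u * t) :=
  .single ⟨h, t, ht, rfl⟩

theorem bruhatLE_of_length_mul_lt {u t : W} (ht : cs.IsReflection t) (h : ℓ (u * t) < ℓ u) :
    BruhatLE cs (u * t) u :=
  .single ⟨h, t, ht, by rw [mul_assoc, ht.mul_self, mul_one]⟩

theorem bruhatLE_mul_simple_mul_of_descent {x t : W} {i : B} (ht : cs.IsReflection t)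
    (hxt : ℓ x < ℓ (x * t)) (hxts : ℓ (x * t * s i) < ℓ (x * t)) :
    BruhatLE cs (x * s i) (x * t) := by
  have ht' : cs.IsReflection (s i * t * s i) := by simpa [inv_simple] using ht.conj (s i)
  have hx : x * s i = x * t * s i * (s i * t * s i) := by
    simp only [mul_assoc, simple_mul_simple_cancel_left]
    rw [← mul_assoc t, ht.mul_self, one_mul]
  rcases lt_or_gt_of_ne (ht'.length_mul_left_ne (x * t * s i)) with hlt | hgt
  · rw [hx]
    exact (bruhatLE_of_length_mul_lt ht' hlt).trans
      (bruhatLE_of_length_mul_lt (cs.isReflection_simple i) hxts)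
  -- otherwise `x * s i` is too long for exchange in a reduced word of `x * t` ending in `i`
  -- to delete any letter but the last one
  rw [← hx] at hgt
  have e1 := cs.length_mul_simple x i
  have e2 := cs.length_mul_simple (x * t) i
  obtain ⟨ω, hω, hωw⟩ := cs.exists_isReduced (x * t * s i)
  rw [CoxeterSystem.IsReduced, ← hωw] at hω
  have hw : x * t = π ω * π [i] := by
    rw [wordProd_singleton, ← hωw, simple_mul_simple_cancel_right]
  have hwt : ℓ (π ω * π [i] * t) < ℓ (π ω * π [i]) := by
    rw [← hw, mul_assoc, ht.mul_self, mul_one]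
    exact hxt
  rcases cs.strong_exchange_append ω [i] ht hwt with ⟨j, hj, he⟩ | ⟨j, hj, he⟩
  · rw [← hw, mul_assoc, ht.mul_self, mul_one, wordProd_singleton] at he
    have hxs' : x * s i = π (ω.eraseIdx j) := by rw [he, simple_mul_simple_cancel_right]
    have hlen := cs.length_wordProd_le (ω.eraseIdx j)
    rw [List.length_eraseIdx_of_lt hj, ← hxs'] at hlen
    omega
  · obtain rfl : j = 0 := by simpa using hj
    rw [← hw, mul_assoc, ht.mul_self, mul_one] at he
    simp only [List.eraseIdx_cons_zero, wordProd_nil, mul_one] at he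
    have hxs' : x * s i = x * t := by
      conv_lhs => rw [he, ← hωw]
      rw [simple_mul_simple_cancel_right]
    rw [hxs']
    exact .refl cs _

theorem BruhatLE.lifting {u w : W} (h : BruhatLE cs u w) (i : B) :
    (ℓ w < ℓ (w * s i) → BruhatLE cs (u * s i) (w * s i)) ∧
      (ℓ (w * s i) < ℓ w → BruhatLE cs (u * s i) w) := by
  have hsi := cs.isReflection_simple i
  induction h with
  | refl => exact ⟨fun _ ↦ .refl cs _, bruhatLE_of_length_mul_lt hsi⟩
  | @tail x _ _ hxw ih =>
    obtain ⟨hxt, t, ht, rfl⟩ := hxw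
    replace ht : cs.IsReflection t := ht
    have ht' : cs.IsReflection (s i * t * s i) := by simpa [inv_simple] using ht.conj (s i)
    have hx_le : BruhatLE cs x (x * t) := bruhatLE_mul_of_length_lt ht hxt
    have e1 := cs.length_mul_simple x i
    constructor
    · intro hasc
      rcases e1 with hxs | hxs
      · have hxts : x * t * s i = x * s i * (s i * t * s i) := by
          simp only [mul_assoc, simple_mul_simple_cancel_left]
        refine (ih.1 (by omega)).trans ?_
        rw [hxts] at hasc ⊢
        exact bruhatLE_mul_of_length_lt ht' (by omega)
      · exact (ih.2 (by omega)).trans (hx_le.trans (bruhatLE_mul_of_length_lt hsi hasc))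
    · intro hdesc
      rcases e1 with hxs | hxs
      · exact (ih.1 (by omega)).trans (bruhatLE_mul_simple_mul_of_descent ht hxt hdesc)
      · exact (ih.2 (by omega)).trans hx_le

theorem BruhatLE.mul_simple_of_ascent {u w : W} (h : BruhatLE cs u w) {i : B}
    (hi : ℓ w < ℓ (w * s i)) : BruhatLE cs (u * s i) (w * s i) :=
  (h.lifting i).1 hi

theorem BruhatLE.mul_simple_of_descent {u w : W} (h : BruhatLE cs u w) {i : B}
    (hi : ℓ (w * s i) < ℓ w) : BruhatLE cs (u * s i) w :=
  (h.lifting i).2 hi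

theorem BruhatLE.mul_wordProd {p q : W} (h : BruhatLE cs p q) {κ : List B}
    (hq : ℓ (q * π κ) = ℓ q + κ.length) : BruhatLE cs (p * π κ) (q * π κ) := by
  induction κ generalizing p q with
  | nil => simpa using h
  | cons i κ ih =>
    rw [wordProd_cons, ← mul_assoc] at hq ⊢
    rw [← mul_assoc]
    have h1 := cs.length_mul_le (q * s i) (π κ)
    have h2 := cs.length_wordProd_le κ
    have h3 := cs.length_mul_simple q i
    simp only [List.length_cons] at hq
    exact ih (h.mul_simple_of_ascent (by omega)) (by omega)

theorem bruhatLE_wordProd_of_sublist {μ ω : List B} (hω : cs.IsReduced ω)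
    (hμ : μ.Sublist ω) :
    BruhatLE cs (π μ) (π ω) := by
  induction ω using List.reverseRecOn generalizing μ with
  | nil =>
    rw [List.sublist_nil.1 hμ]
    exact .refl cs _
  | append_singleton ω i ih =>
    have hω' := hω.of_append_left
    have hasc : ℓ (π ω) < ℓ (π ω * s i) := by
      rw [CoxeterSystem.IsReduced, wordProd_append, wordProd_singleton] at hω
      rw [CoxeterSystem.IsReduced] at hω'
      simp only [List.length_append, List.length_singleton] at hω
      omega
    obtain ⟨μ₁, μ₂, rfl, hμ₁, hμ₂⟩ := List.sublist_append_iff.1 hμ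
    have h₁ := ih hω' hμ₁
    rw [wordProd_append, wordProd_append, wordProd_singleton]
    rcases List.sublist_singleton.1 hμ₂ with rfl | rfl
    · rw [wordProd_nil, mul_one]
      exact h₁.trans (bruhatLE_mul_of_length_lt (cs.isReflection_simple i) hasc)
    · rw [wordProd_singleton]
      exact h₁.mul_simple_of_ascent hasc

end Bruhat

namespace CoxeterSystem

variable {M : CoxeterMatrix B} (cs : CoxeterSystem M W)

local prefix:100 "s" => cs.simple
local prefix:100 "π" => cs.wordProd
local prefix:100 "ℓ" => cs.length

noncomputable def greedySubword (a : W) : List B → List B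
  | [] => []
  | i :: ω => if ℓ a < ℓ (a * s i) then i :: greedySubword (a * s i) ω else greedySubword a ω

theorem greedySubword_sublist (a : W) (ω : List B) : (cs.greedySubword a ω).Sublist ω := by
  induction ω generalizing a with
  | nil => exact .slnil
  | cons i ω ih =>
    rw [greedySubword]
    split_ifs
    · exact (ih _).cons_cons i
    · exact (ih a).cons i

theorem length_mul_wordProd_greedySubword (a : W) (ω : List B) :
    ℓ (a * π (cs.greedySubword a ω)) = ℓ a + (cs.greedySubword a ω).length := by
  induction ω generalizing a with
  | nil => simp [greedySubword]
  | cons i ω ih =>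
    rw [greedySubword]
    split_ifs with hasc
    · have := cs.length_mul_simple a i
      rw [wordProd_cons, ← mul_assoc, ih, List.length_cons]
      omega
    · exact ih a

theorem bruhatLE_mul_wordProd_greedySubword {a b : W} (h : BruhatLE cs b a) (ω : List B) :
    BruhatLE cs (b * π ω) (a * π (cs.greedySubword a ω)) := by
  induction ω generalizing a b with
  | nil => simpa [greedySubword] using h
  | cons i ω ih =>
    rw [greedySubword, wordProd_cons, ← mul_assoc]
    split_ifs with hasc
    · rw [wordProd_cons, ← mul_assoc]
      exact ih (h.mul_simple_of_ascent hasc)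
    · have := cs.length_mul_simple a i
      exact ih (h.mul_simple_of_descent (by omega))

end CoxeterSystem

theorem QJle_omit_length_additive_general {M : CoxeterMatrix B} (cs : CoxeterSystem M W)
    (J : Set B) (v w v' w' r : W)
    (hw : ∀ j ∈ J, cs.length w < cs.length (w * cs.simple j))
    (hvw : BruhatLE cs v w)
    (hr : r ∈ Subgroup.closure (cs.simple '' J))
    (h1 : BruhatLE cs v' (v * r))
    (h3 : BruhatLE cs (w * r) w') :
    ∃ r' ∈ Subgroup.closure (cs.simple '' J),
      cs.length (v * r') = cs.length v + cs.length r' ∧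
      BruhatLE cs v' (v * r') ∧ BruhatLE cs (v * r') (w * r') ∧
      BruhatLE cs (w * r') w' := by
  obtain ⟨ω, hωJ, hω, rfl⟩ := cs.exists_isReduced_of_mem_closure hr
  set κ := cs.greedySubword v ω
  have hκω : κ.Sublist ω := cs.greedySubword_sublist v ω
  have hκJ : ∀ b ∈ κ, b ∈ J := fun b hb ↦ hωJ b (hκω.subset hb)
  have hvκ := cs.length_mul_wordProd_greedySubword v ω
  have hκ := cs.isReduced_of_length_mul_wordProd hvκ
  refine ⟨cs.wordProd κ, cs.wordProd_mem_closure hκJ, by rw [hκ.eq]; exact hvκ,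
    h1.trans (cs.bruhatLE_mul_wordProd_greedySubword (.refl cs v) ω),
    hvw.mul_wordProd (cs.length_mul_wordProd_of_forall_lt hw hκJ hκ), ?_⟩
  obtain ⟨ρ, hρ, rfl⟩ := cs.exists_isReduced w
  have hρω : cs.IsReduced (ρ ++ ω) := by
    rw [CoxeterSystem.IsReduced, cs.wordProd_append,
      cs.length_mul_wordProd_of_forall_lt hw hωJ hω, hρ.eq, List.length_append]
  have hsub := bruhatLE_wordProd_of_sublist hρω (hκω.append_left ρ)
  rw [cs.wordProd_append, cs.wordProd_append] at hsub
  exact hsub.trans h3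

/-- The length-additivity requirement in the definition of `⪯` on `Q_J` can be omitted:
if `v' ≤ v*r ≤ w*r ≤ w'` for some `r ∈ W_J`, then there is `r' ∈ W_J` with `v*r'`
length-additive and `v' ≤ v*r' ≤ w*r' ≤ w'`. -/
theorem QJle_omit_length_additive {M : CoxeterMatrix B} (cs : CoxeterSystem M W)
    (J : Set B) (v w v' w' r : W)
    (hw : ∀ j ∈ J, cs.length w < cs.length (w * cs.simple j))
    (hw' : ∀ j ∈ J, cs.length w' < cs.length (w' * cs.simple j))
    (hvw : BruhatLE cs v w) (hv'w' : BruhatLE cs v' w')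
    (hr : r ∈ Subgroup.closure (cs.simple '' J))
    (h1 : BruhatLE cs v' (v * r)) (h2 : BruhatLE cs (v * r) (w * r))
    (h3 : BruhatLE cs (w * r) w') :
    ∃ r' ∈ Subgroup.closure (cs.simple '' J),
      cs.length (v * r') = cs.length v + cs.length r' ∧
      BruhatLE cs v' (v * r') ∧ BruhatLE cs (v * r') (w * r') ∧
      BruhatLE cs (w * r') w' :=
  QJle_omit_length_additive_general cs J v w v' w' r hw hvw hr h1 h3
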